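/- Convergence to the unique equilibrium of a dissipative mechanical system: let U : ℝⁿ → ℝ be continuously differentiable with locally Lipschitz gradient ∇U, and suppose ∇U(p) = 0 holds for exactly one point p = q_min. Let F : ℝⁿ × ℝⁿ → ℝⁿ be locally Lipschitz with ⟨F(p, v), v⟩ < 0 for all p ∈ ℝⁿ and all v ≠ 0, and F(p, 0) = 0 for all p. Let q : [0,∞) → ℝⁿ be twice differentiable with q̈(t) = −∇U(q(t)) + F(q(t), q̇(t)) for all t ≥ 0, and suppose the forward orbit {(q(t), q̇(t)) : t ≥ 0} is precompact in ℝⁿ × ℝⁿ. Then (q(t), q̇(t)) → (q_min, 0) as t → ∞. -/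

import Mathlib

/-!
The energy `U(q) + ‖q̇‖²/2` has derivative `⟪F(q, q̇), q̇⟫ ≤ 0` along the motion and is bounded
below on the compact orbit closure, so it converges. The state `(q, q̇)` moves with bounded
velocity inside a compact set, so every continuous function of the state is uniformly continuous
in time, and Barbalat's lemma makes the dissipation `⟪F(q, q̇), q̇⟫` tend to `0`. Hence every limit
point of `(q, q̇)` has zero velocity and `q̇ → 0`; Barbalat's lemma for `q̇` then gives `q̈ → 0`.
At a limit point `(p, 0)` the equation of motion reads `∇U(p) = F(p, 0) = 0`, so `p = q_min`,
and compactness turns this uniqueness of limit points into convergence.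
-/

open RealInnerProductSpace Filter Topology Set

lemma MapClusterPt.eq_of_tendsto {α X : Type*} [TopologicalSpace X] [T2Space X] {x y : X}
    {l : Filter α} {u : α → X} (hx : MapClusterPt x l u) (hu : Tendsto u l (𝓝 y)) : x = y :=
  eq_of_nhds_neBot (hx.neBot.mono (inf_le_inf_left _ hu))

lemma IsCompact.tendsto_comp_of_mapClusterPt {α X Y : Type*} [TopologicalSpace X]
    [TopologicalSpace Y] {K : Set X} (hK : IsCompact K) {l : Filter α} {u : α → X}
    (hu : ∀ᶠ t in l, u t ∈ K) {g : X → Y} (hg : Continuous g) {c : Y}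
    (h : ∀ z ∈ K, MapClusterPt z l u → g z = c) : Tendsto (g ∘ u) l (𝓝 c) := by
  rw [← nhdsSet_singleton]
  exact (hg.tendsto_nhdsSet (mapsTo_preimage g {c})).comp
    (hK.tendsto_nhdsSet_of_mapClusterPt hu h)

lemma AntitoneOn.exists_tendsto_atTop_of_bddBelow {f : ℝ → ℝ} {a : ℝ}
    (hf : AntitoneOn f (Ici a)) (hbdd : BddBelow (f '' Ici a)) : ∃ L, Tendsto f atTop (𝓝 L) := by
  have hanti : Antitone fun t => f (max t a) := fun s t hst =>
    hf (le_max_right s a) (le_max_right t a) (max_le_max_right a hst)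
  have hbdd' : BddBelow (range fun t => f (max t a)) :=
    hbdd.mono (range_subset_iff.2 fun t => mem_image_of_mem f (le_max_right t a))
  refine ⟨_, (tendsto_atTop_ciInf hanti hbdd').congr' ?_⟩
  filter_upwards [eventually_ge_atTop a] with t ht
  rw [max_eq_left ht]

lemma ContDiff.continuous_gradient {E : Type*} [NormedAddCommGroup E] [InnerProductSpace ℝ E]
    [CompleteSpace E] {U : E → ℝ} (hU : ContDiff ℝ 1 U) : Continuous (gradient U) :=
  (InnerProductSpace.toDual ℝ E).symm.continuous.comp (hU.continuous_fderiv one_ne_zero)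

section Barbalat

variable {E : Type*} [NormedAddCommGroup E] [NormedSpace ℝ E]

lemma norm_image_sub_sub_smul_le {f f' : ℝ → E} {t h C : ℝ} (hh : 0 ≤ h)
    (hf : ∀ s ∈ Icc t (t + h), HasDerivWithinAt f (f' s) (Icc t (t + h)) s)
    (hC : ∀ s ∈ Icc t (t + h), ‖f' s - f' t‖ ≤ C) :
    ‖f (t + h) - f t - h • f' t‖ ≤ C * h := by
  have hderiv : ∀ s ∈ Icc t (t + h),
      HasDerivWithinAt (fun s => f s - s • f' t) (f' s - f' t) (Icc t (t + h)) s := fun s hs =>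
    ((hf s hs).sub ((hasDerivAt_id s).smul_const (f' t)).hasDerivWithinAt).congr_deriv (by simp)
  have := (convex_Icc t (t + h)).norm_image_sub_le_of_norm_hasDerivWithin_le hderiv hC
    (left_mem_Icc.2 (by linarith)) (right_mem_Icc.2 (by linarith))
  rw [add_sub_cancel_left, Real.norm_of_nonneg hh] at this
  convert this using 2
  simp only [add_smul]
  abel

/-- Barbalat's lemma. -/
theorem tendsto_zero_of_hasDerivWithinAt_of_uniformContinuousOn {f f' : ℝ → E} {a : ℝ} {L : E}
    (hf : ∀ t ∈ Ici a, HasDerivWithinAt f (f' t) (Ici a) t) (hfL : Tendsto f atTop (𝓝 L))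
    (hf' : UniformContinuousOn f' (Ici a)) : Tendsto f' atTop (𝓝 0) := by
  refine Metric.tendsto_nhds.2 fun ε hε => ?_
  obtain ⟨δ, hδ, hδf'⟩ := Metric.uniformContinuousOn_iff.1 hf' (ε / 2) (half_pos hε)
  set h := δ / 2 with h_def
  have hh : 0 < h := half_pos hδ
  have hincr : Tendsto (fun t => f (t + h) - f t) atTop (𝓝 0) := by
    simpa using (hfL.comp (tendsto_atTop_add_const_right _ h tendsto_id)).sub hfL
  filter_upwards [Metric.tendsto_nhds.1 hincr (h * ε / 2) (by positivity), eventually_ge_atTop a]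
    with t hsmall ht
  rw [dist_zero_right] at hsmall ⊢
  have hsub : Icc t (t + h) ⊆ Ici a := fun s hs => ht.trans hs.1
  have hmvt : ‖f (t + h) - f t - h • f' t‖ ≤ ε / 2 * h := by
    refine norm_image_sub_sub_smul_le hh.le (fun s hs => (hf s (hsub hs)).mono hsub)
      fun s hs => ?_
    rw [← dist_eq_norm]
    refine (hδf' s (hsub hs) t ht ?_).le
    rw [Real.dist_eq, abs_of_nonneg (sub_nonneg.2 hs.1)]
    linarith [hs.2]
  have : h * ‖f' t‖ < h * ε :=
    calc h * ‖f' t‖ = ‖(f (t + h) - f t) - (f (t + h) - f t - h • f' t)‖ := by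
          rw [sub_sub_cancel, norm_smul, Real.norm_of_nonneg hh.le]
      _ ≤ ‖f (t + h) - f t‖ + ‖f (t + h) - f t - h • f' t‖ := norm_sub_le _ _
      _ < h * ε := by linarith
  exact lt_of_mul_lt_mul_left this hh.le

end Barbalat

section Lyapunov

variable {E X : Type*} [NormedAddCommGroup E] [NormedSpace ℝ E]

lemma IsCompact.uniformContinuousOn_comp_of_hasDerivWithinAt [UniformSpace X] {K : Set E}
    (hK : IsCompact K) {V : E → E} (hV : ContinuousOn V K) {x : ℝ → E} {a : ℝ}
    (hxK : MapsTo x (Ici a) K) (hx : ∀ t ∈ Ici a, HasDerivWithinAt x (V (x t)) (Ici a) t)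
    {Φ : E → X} (hΦ : ContinuousOn Φ K) : UniformContinuousOn (Φ ∘ x) (Ici a) := by
  obtain ⟨C, hC⟩ := hK.exists_bound_of_continuousOn hV
  have hlip : LipschitzOnWith C.toNNReal x (Ici a) :=
    (convex_Ici a).lipschitzOnWith_of_nnnorm_hasDerivWithin_le hx fun t ht => by
      rw [← NNReal.coe_le_coe, coe_nnnorm]
      exact (hC _ (hxK ht)).trans (Real.le_coe_toNNReal C)
  exact (hK.uniformContinuousOn_of_continuous hΦ).comp hlip.uniformContinuousOn hxK

theorem IsCompact.tendsto_lyapunov_derivative_zero {K : Set E} (hK : IsCompact K) {V : E → E}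
    (hV : ContinuousOn V K) {x : ℝ → E} {a : ℝ} (hxK : MapsTo x (Ici a) K)
    (hx : ∀ t ∈ Ici a, HasDerivWithinAt x (V (x t)) (Ici a) t) {Θ ψ : E → ℝ}
    (hΘ : ContinuousOn Θ K) (hψ : ContinuousOn ψ K)
    (hΘx : ∀ t ∈ Ici a, HasDerivWithinAt (Θ ∘ x) (ψ (x t)) (Ici a) t)
    (hψx : ∀ t ∈ Ici a, ψ (x t) ≤ 0) : Tendsto (ψ ∘ x) atTop (𝓝 0) := by
  have hanti : AntitoneOn (Θ ∘ x) (Ici a) :=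
    antitoneOn_of_hasDerivWithinAt_nonpos (convex_Ici a)
      (fun t ht => (hΘx t ht).continuousWithinAt)
      (fun t ht => (hΘx t (interior_subset ht)).mono interior_subset)
      fun t ht => hψx t (interior_subset ht)
  have hbdd : BddBelow ((Θ ∘ x) '' Ici a) :=
    (hK.bddBelow_image hΘ).mono (image_comp Θ x _ ▸ image_mono hxK.image_subset)
  obtain ⟨L, hL⟩ := hanti.exists_tendsto_atTop_of_bddBelow hbdd
  exact tendsto_zero_of_hasDerivWithinAt_of_uniformContinuousOn hΘx hL
    (hK.uniformContinuousOn_comp_of_hasDerivWithinAt hV hxK hx hψ)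

end Lyapunov

noncomputable def mechanicalEnergy {E : Type*} [NormedAddCommGroup E] (U : E → ℝ) (z : E × E) :
    ℝ :=
  U z.1 + ‖z.2‖ ^ 2 / 2

lemma continuous_mechanicalEnergy {E : Type*} [NormedAddCommGroup E] {U : E → ℝ}
    (hU : Continuous U) : Continuous (mechanicalEnergy U) := by
  unfold mechanicalEnergy
  fun_prop

lemma hasDerivWithinAt_mechanicalEnergy {E : Type*} [NormedAddCommGroup E] [InnerProductSpace ℝ E]
    [CompleteSpace E] {U : E → ℝ} {q q' : ℝ → E} {w : E} {s : Set ℝ} {t : ℝ}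
    (hU : DifferentiableAt ℝ U (q t)) (hq : HasDerivWithinAt q (q' t) s t)
    (hq' : HasDerivWithinAt q' (-gradient U (q t) + w) s t) :
    HasDerivWithinAt (fun τ => mechanicalEnergy U (q τ, q' τ)) ⟪w, q' t⟫ s t := by
  have hUq : HasDerivWithinAt (fun τ => U (q τ)) ⟪gradient U (q t), q' t⟫ s t := by
    refine (hU.hasFDerivAt.comp_hasDerivWithinAt t hq).congr_deriv ?_
    rw [gradient, InnerProductSpace.toDual_symm_apply]
  refine (hUq.add (hq'.norm_sq.div_const 2)).congr_deriv ?_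
  rw [inner_add_right, inner_neg_right, real_inner_comm w, real_inner_comm (gradient U (q t))]
  ring

lemma inner_dissipation_nonpos {E : Type*} [NormedAddCommGroup E] [InnerProductSpace ℝ E]
    {F : E → E → E} (hFdiss : ∀ p v, v ≠ 0 → ⟪F p v, v⟫ < 0) (hF0 : ∀ p, F p 0 = 0) (p v : E) :
    ⟪F p v, v⟫ ≤ 0 := by
  rcases eq_or_ne v 0 with rfl | hv
  · simp [hF0]
  · exact (hFdiss p v hv).le

theorem tendsto_unique_equilibrium_general
    {n : ℕ}
    (U : EuclideanSpace ℝ (Fin n) → ℝ)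
    (hU : ContDiff ℝ 1 U)
    (qmin : EuclideanSpace ℝ (Fin n))
    (hcrit : ∀ p : EuclideanSpace ℝ (Fin n), gradient U p = 0 ↔ p = qmin)
    (F : EuclideanSpace ℝ (Fin n) → EuclideanSpace ℝ (Fin n) → EuclideanSpace ℝ (Fin n))
    (hFLip : LocallyLipschitz
      (fun p : EuclideanSpace ℝ (Fin n) × EuclideanSpace ℝ (Fin n) => F p.1 p.2))
    (hFdiss : ∀ (p v : EuclideanSpace ℝ (Fin n)), v ≠ 0 → ⟪F p v, v⟫ < 0)
    (hF0 : ∀ p : EuclideanSpace ℝ (Fin n), F p 0 = 0)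
    (q q' q'' : ℝ → EuclideanSpace ℝ (Fin n))
    (hq : ∀ t : ℝ, 0 ≤ t → HasDerivWithinAt q (q' t) (Set.Ici 0) t)
    (hq' : ∀ t : ℝ, 0 ≤ t → HasDerivWithinAt q' (q'' t) (Set.Ici 0) t)
    (heq : ∀ t : ℝ, 0 ≤ t → q'' t = -gradient U (q t) + F (q t) (q' t))
    (hpre : IsCompact (closure ((fun t => (q t, q' t)) '' Set.Ici (0 : ℝ)))) :
    Tendsto (fun t => (q t, q' t)) atTop (𝓝 (qmin, 0)) := by
  set x := fun t => (q t, q' t)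
  set K := closure (x '' Ici 0)
  have hxK : MapsTo x (Ici 0) K := fun t ht => subset_closure (mem_image_of_mem x ht)
  have hx_ev : ∀ᶠ t in atTop, x t ∈ K := eventually_ge_atTop 0 |>.mono hxK
  set Φ := fun z : EuclideanSpace ℝ (Fin n) × EuclideanSpace ℝ (Fin n) =>
    -gradient U z.1 + F z.1 z.2
  have hΦ : Continuous Φ := (hU.continuous_gradient.comp continuous_fst).neg.add hFLip.continuous
  have hq'Φ : ∀ t ∈ Ici (0 : ℝ), HasDerivWithinAt q' (Φ (x t)) (Ici 0) t := fun t ht =>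
    (hq' t ht).congr_deriv (heq t ht)
  set V := fun z : EuclideanSpace ℝ (Fin n) × EuclideanSpace ℝ (Fin n) => (z.2, Φ z)
  have hx : ∀ t ∈ Ici (0 : ℝ), HasDerivWithinAt x (V (x t)) (Ici 0) t := fun t ht =>
    (hq t ht).prodMk (hq'Φ t ht)
  set ψ := fun z : EuclideanSpace ℝ (Fin n) × EuclideanSpace ℝ (Fin n) => ⟪F z.1 z.2, z.2⟫
  have hψ : Continuous ψ := hFLip.continuous.inner continuous_snd
  have hdiss : Tendsto (ψ ∘ x) atTop (𝓝 0) :=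
    hpre.tendsto_lyapunov_derivative_zero (by fun_prop) hxK hx
      (continuous_mechanicalEnergy hU.continuous).continuousOn hψ.continuousOn
      (fun t ht => hasDerivWithinAt_mechanicalEnergy (hU.differentiable one_ne_zero _)
        (hq t ht) (hq'Φ t ht))
      fun t _ => inner_dissipation_nonpos hFdiss hF0 _ _
  have hvel : ∀ z ∈ K, MapClusterPt z atTop x → z.2 = 0 := fun z _ hz =>
    by_contra fun h => (hFdiss _ _ h).ne <|
      (hz.continuousAt_comp hψ.continuousAt).eq_of_tendsto hdiss
  have hq''0 : Tendsto (Φ ∘ x) atTop (𝓝 0) :=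
    tendsto_zero_of_hasDerivWithinAt_of_uniformContinuousOn hq'Φ
      (hpre.tendsto_comp_of_mapClusterPt hx_ev continuous_snd hvel)
      (hpre.uniformContinuousOn_comp_of_hasDerivWithinAt (by fun_prop) hxK hx hΦ.continuousOn)
  refine hpre.tendsto_nhds_of_unique_mapClusterPt hx_ev fun z hzK hz => ?_
  have hv := hvel z hzK hz
  have hΦz : Φ z = 0 := (hz.continuousAt_comp hΦ.continuousAt).eq_of_tendsto hq''0
  simp only [Φ, hv, hF0, add_zero, neg_eq_zero, hcrit] at hΦz
  exact Prod.ext hΦz hv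

/-- Convergence to the unique equilibrium of a dissipative mechanical system: if
`U` is `C¹` with locally Lipschitz gradient and `q_min` is the unique critical
point of `U`, `F` is locally Lipschitz with `⟨F(p,v), v⟩ < 0` for `v ≠ 0` and
`F(p,0) = 0`, and `q : [0,∞) → ℝⁿ` is a twice differentiable solution of
`q̈ = −∇U(q) + F(q, q̇)` with precompact forward orbit, then
`(q(t), q̇(t)) → (q_min, 0)` as `t → ∞`. -/
theorem tendsto_unique_equilibrium
    {n : ℕ}
    (U : EuclideanSpace ℝ (Fin n) → ℝ)
    (hU : ContDiff ℝ 1 U) (hgradLip : LocallyLipschitz (gradient U))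
    (qmin : EuclideanSpace ℝ (Fin n))
    (hcrit : ∀ p : EuclideanSpace ℝ (Fin n), gradient U p = 0 ↔ p = qmin)
    (F : EuclideanSpace ℝ (Fin n) → EuclideanSpace ℝ (Fin n) → EuclideanSpace ℝ (Fin n))
    (hFLip : LocallyLipschitz
      (fun p : EuclideanSpace ℝ (Fin n) × EuclideanSpace ℝ (Fin n) => F p.1 p.2))
    (hFdiss : ∀ (p v : EuclideanSpace ℝ (Fin n)), v ≠ 0 → ⟪F p v, v⟫ < 0)
    (hF0 : ∀ p : EuclideanSpace ℝ (Fin n), F p 0 = 0)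
    (q q' q'' : ℝ → EuclideanSpace ℝ (Fin n))
    (hq : ∀ t : ℝ, 0 ≤ t → HasDerivWithinAt q (q' t) (Set.Ici 0) t)
    (hq' : ∀ t : ℝ, 0 ≤ t → HasDerivWithinAt q' (q'' t) (Set.Ici 0) t)
    (heq : ∀ t : ℝ, 0 ≤ t → q'' t = -gradient U (q t) + F (q t) (q' t))
    (hpre : IsCompact (closure ((fun t => (q t, q' t)) '' Set.Ici (0 : ℝ)))) :
    Tendsto (fun t => (q t, q' t)) atTop (𝓝 (qmin, 0)) :=
  tendsto_unique_equilibrium_general U hU qmin hcrit F hFLip hFdiss hF0 q q' q'' hq hq' heq hpre
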